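/- Let q be an odd prime power. The rank over F_2 of the matrix A_11, indexed by anisotropic points of PG(2,q) with (P,R)-entry 1 iff ⟨P,R⟩ = 0 under the bilinear form associated to Q(x) = x_1^2 − x_0 x_2, equals q^2 − 1 (i.e., one less than its order q^2). -/

import Mathlib

/-- The quadratic form `Q(x₀,x₁,x₂) = x₁² - x₀x₂` on `F³`. -/
def Qc (F : Type) [Field F] (v : Fin 3 → F) : F := v 1 ^ 2 - v 0 * v 2

/-- The bilinear form associated to `Qc`. -/
def Bc (F : Type) [Field F] (x y : Fin 3 → F) : F :=
  (2 : F)⁻¹ * (Qc F (x + y) - Qc F x - Qc F y)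

/-- A point of `PG(2,q)` is absolute if `Q` vanishes on it. -/
def Absolute (F : Type) [Field F] (P : Projectivization F (Fin 3 → F)) : Prop :=
  Qc F P.rep = 0

/-- A point of `PG(2,q)` is external if `Q` takes a nonzero square value on it. -/
def External (F : Type) [Field F] (P : Projectivization F (Fin 3 → F)) : Prop :=
  IsSquare (Qc F P.rep) ∧ Qc F P.rep ≠ 0

/-- A point of `PG(2,q)` is internal if `Q` takes a non-square value on it. -/
def Internal (F : Type) [Field F] (P : Projectivization F (Fin 3 → F)) : Prop :=
  ¬ IsSquare (Qc F P.rep)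

/-- Lines of `PG(2,q)` are the 2-dimensional subspaces of `F³`. -/
def IsLine (F : Type) [Field F] (L : Submodule F (Fin 3 → F)) : Prop :=
  Module.finrank F ↥L = 2

/-- The number of absolute points on a line. -/
noncomputable def nAbs (F : Type) [Field F] (L : Submodule F (Fin 3 → F)) : ℕ :=
  Nat.card {P : Projectivization F (Fin 3 → F) // Absolute F P ∧ P.submodule ≤ L}

open Classical in
/-- Indicator of a proposition in `F₂`. -/
noncomputable def ind (p : Prop) : ZMod 2 := if p then 1 else 0

/-- The incidence matrix between anisotropic points and the polar lines of
anisotropic points: the `(P,R)` entry is `1` iff `⟨P,R⟩ = 0`. -/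
noncomputable def A11 (F : Type) [Field F] :
    Matrix {P : Projectivization F (Fin 3 → F) // Qc F P.rep ≠ 0}
      {P : Projectivization F (Fin 3 → F) // Qc F P.rep ≠ 0} (ZMod 2) :=
  Matrix.of fun P R => ind (Bc F P.1.rep R.1.rep = 0)

/-!
Write `A = A11 F` over `F₂`, `J` for all-ones matrices and `N` for the incidence matrix between
anisotropic points `P` and conic points `X` with `⟨P, X⟩ = 0`. The polar lines of two distinct
points meet in one point `P × S`, and `Q(P × S)` is a nonzero multiple of `⟨P, S⟩² - Q(P)Q(S)`;
counting common conjugates therefore gives `A² = J + I + NNᵀ` and `NᵀA = J + Nᵀ`. On the diagonal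
this uses that the polar line of an anisotropic `p` carries an even number of anisotropic points
(`R ↦ p × R` pairs them up) and of conic points (the reflection in `p` pairs up the conic points
off that line, and the conic has `q + 1` points). Now `Ax = 0` gives `Nᵀx = Jx`, then `x = Jx`, so
the kernel of `A` is spanned by the all-ones vector, and there are `(q² + q + 1) - (q + 1) = q²`
anisotropic points.
-/

open scoped LinearAlgebra.Projectivization Matrix

section Polarity

variable {F : Type} [Field F]

def polar (u : Fin 3 → F) : Fin 3 → F := ![-u 2, 2 * u 1, -u 0]

/-- Spans the intersection of the polar lines of `u` and `v`. -/
def polarCross (u v : Fin 3 → F) : Fin 3 → F := polar u ⨯₃ polar v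

lemma Bc_eq (u v : Fin 3 → F) : Bc F u v = 2⁻¹ * (polar u ⬝ᵥ v) := by
  rw [Bc]
  congr 1
  simp only [Qc, polar, dotProduct, Fin.sum_univ_three, Pi.add_apply, Matrix.cons_val_zero, Matrix.cons_val_one, Matrix.cons_val]
  ring

lemma Bc_eq_zero_iff [NeZero (2 : F)] (u v : Fin 3 → F) : Bc F u v = 0 ↔ polar u ⬝ᵥ v = 0 := by
  simp [Bc_eq, two_ne_zero]

lemma polar_dotProduct_comm (u v : Fin 3 → F) : polar u ⬝ᵥ v = polar v ⬝ᵥ u := by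
  simp only [polar, dotProduct, Fin.sum_univ_three, Matrix.cons_val_zero, Matrix.cons_val_one, Matrix.cons_val]
  ring

lemma Bc_comm (u v : Fin 3 → F) : Bc F u v = Bc F v u := by
  rw [Bc_eq, Bc_eq, polar_dotProduct_comm]

lemma polar_dotProduct_self (u : Fin 3 → F) : polar u ⬝ᵥ u = 2 * Qc F u := by
  simp only [polar, Qc, dotProduct, Fin.sum_univ_three, Matrix.cons_val_zero, Matrix.cons_val_one, Matrix.cons_val]
  ring

lemma Qc_smul (c : F) (v : Fin 3 → F) : Qc F (c • v) = c ^ 2 * Qc F v := by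
  simp only [Qc, Pi.smul_apply, smul_eq_mul]
  ring

lemma ne_zero_of_Qc_ne_zero {v : Fin 3 → F} (h : Qc F v ≠ 0) : v ≠ 0 := by
  rintro rfl
  simp [Qc] at h

lemma Qc_polarCross (u v : Fin 3 → F) :
    Qc F (polarCross u v) = (polar u ⬝ᵥ v) ^ 2 - 4 * Qc F u * Qc F v := by
  simp only [Qc, polarCross, polar, cross_apply, dotProduct, Fin.sum_univ_three, Matrix.cons_val_zero, Matrix.cons_val_one, Matrix.cons_val]
  ring

lemma polarCross_eq_zero_iff [NeZero (2 : F)] (u v : Fin 3 → F) :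
    polarCross u v = 0 ↔ u ⨯₃ v = 0 := by
  simp only [polarCross, polar, cross_apply, Matrix.cons_eq_zero_iff, Matrix.zero_empty, and_true,
    Matrix.cons_val_zero, Matrix.cons_val_one, Matrix.cons_val_two, Matrix.head_cons,
    Matrix.tail_cons, sub_eq_zero]
  have h2 : (2 : F) ≠ 0 := two_ne_zero
  constructor
  · rintro ⟨h0, h1, h2'⟩
    refine ⟨mul_left_cancel₀ h2 ?_, by linear_combination -h1, mul_left_cancel₀ h2 ?_⟩
    · linear_combination h2'
    · linear_combination h0
  · rintro ⟨h0, h1, h2'⟩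
    exact ⟨by linear_combination 2 * h2', by linear_combination -h1, by linear_combination 2 * h0⟩

lemma polarCross_cross (u v y : Fin 3 → F) :
    polarCross u v ⨯₃ y = (polar u ⬝ᵥ y) • polar v - (polar v ⬝ᵥ y) • polar u :=
  cross_cross_eq_smul_sub_smul _ _ _

/-- The reflection in `p`, scaled by `Q(p)` so that no division occurs. -/
def reflect (p x : Fin 3 → F) : Fin 3 → F := Qc F p • x - (polar p ⬝ᵥ x) • p

lemma polar_dotProduct_reflect (p x : Fin 3 → F) :
    polar p ⬝ᵥ reflect p x = -(Qc F p * (polar p ⬝ᵥ x)) := by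
  simp only [reflect, dotProduct_sub, dotProduct_smul, polar_dotProduct_self, smul_eq_mul]
  ring

lemma reflect_reflect (p x : Fin 3 → F) : reflect p (reflect p x) = Qc F p ^ 2 • x := by
  rw [reflect, polar_dotProduct_reflect, reflect]
  module

lemma reflect_smul (p x : Fin 3 → F) (c : F) : reflect p (c • x) = c • reflect p x := by
  simp only [reflect, dotProduct_smul, smul_eq_mul]
  module

lemma reflect_ne_zero {p x : Fin 3 → F} (hp : Qc F p ≠ 0) (hx : x ≠ 0) : reflect p x ≠ 0 := by
  intro h
  have := reflect_reflect p x
  rw [h, show reflect p 0 = 0 by simp [reflect]] at this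
  exact hx ((smul_eq_zero.1 this.symm).resolve_left (pow_ne_zero 2 hp))

lemma Qc_reflect (p x : Fin 3 → F) : Qc F (reflect p x) = Qc F p ^ 2 * Qc F x := by
  simp only [reflect, Qc, polar, dotProduct, Fin.sum_univ_three, Pi.sub_apply, Pi.smul_apply,
    smul_eq_mul, Matrix.cons_val_zero, Matrix.cons_val_one, Matrix.cons_val]
  ring

lemma reflect_cross_self (p x : Fin 3 → F) :
    reflect p x ⨯₃ x = -(polar p ⬝ᵥ x) • p ⨯₃ x := by
  simp [reflect, cross_self]

end Polarity

section Indicator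

lemma ind_of {p : Prop} (h : p) : ind p = 1 := if_pos h

lemma ind_of_not {p : Prop} (h : ¬p) : ind p = 0 := if_neg h

lemma ind_mul_ind (p q : Prop) : ind p * ind q = ind (p ∧ q) := by
  by_cases hp : p <;> by_cases hq : q <;> simp [ind, hp, hq]

lemma ind_not (p : Prop) : ind (¬p) = 1 + ind p := by
  by_cases hp : p <;> simp [ind, hp]
  decide

lemma sum_ind_val_eq {α : Type*} (pred : α → Prop) [Fintype {a // pred a}] (w : α) :
    ∑ a : {a // pred a}, ind (a.1 = w) = ind (pred w) := by
  by_cases hw : pred w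
  · rw [ind_of hw, Fintype.sum_eq_single ⟨w, hw⟩ fun a ha => ind_of_not fun h => ha (Subtype.ext h),
      ind_of rfl]
  · rw [ind_of_not hw]
    exact Finset.sum_eq_zero fun a _ => ind_of_not fun h => hw (h ▸ a.2)

lemma sum_ind_eq_zero_of_involution {γ : Type*} [Fintype γ] {c : γ → Prop} (g : ∀ t, c t → γ)
    (hg : ∀ t ht, c (g t ht)) (hgg : ∀ t ht, g (g t ht) (hg t ht) = t)
    (hne : ∀ t ht, g t ht ≠ t) : ∑ t, ind (c t) = 0 := by
  classical
  have hsum : ∑ t, ind (c t) = ∑ t ∈ Finset.univ.filter c, 1 := by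
    rw [Finset.sum_filter]
    rfl
  rw [hsum]
  exact Finset.sum_involution (fun t ht => g t (Finset.mem_filter.1 ht).2) (fun _ _ => by decide)
    (fun t _ _ => hne t _) (fun t _ => Finset.mem_filter.2 ⟨Finset.mem_univ _, hg t _⟩)
    (fun t _ => hgg t _)

end Indicator

abbrev AnisoPt (F : Type) [Field F] := {P : ℙ F (Fin 3 → F) // Qc F P.rep ≠ 0}

abbrev AbsPt (F : Type) [Field F] := {P : ℙ F (Fin 3 → F) // Qc F P.rep = 0}

section Projective

variable {F : Type} [Field F]

lemma exists_mk_rep_eq_smul (v : Fin 3 → F) (hv : v ≠ 0) :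
    ∃ c : F, c ≠ 0 ∧ (Projectivization.mk F v hv).rep = c • v := by
  obtain ⟨a, ha⟩ := Projectivization.exists_smul_eq_mk_rep F v hv
  exact ⟨a, a.ne_zero, ha.symm⟩

lemma Qc_mk_rep_eq_zero_iff (v : Fin 3 → F) (hv : v ≠ 0) :
    Qc F (Projectivization.mk F v hv).rep = 0 ↔ Qc F v = 0 := by
  obtain ⟨c, hc, h⟩ := exists_mk_rep_eq_smul v hv
  simp [h, Qc_smul, hc]

lemma dotProduct_mk_rep_eq_zero_iff (u v : Fin 3 → F) (hv : v ≠ 0) :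
    u ⬝ᵥ (Projectivization.mk F v hv).rep = 0 ↔ u ⬝ᵥ v = 0 := by
  obtain ⟨c, hc, h⟩ := exists_mk_rep_eq_smul v hv
  simp [h, hc]

lemma polarCross_rep_ne_zero [NeZero (2 : F)] {P S : ℙ F (Fin 3 → F)} (h : P ≠ S) :
    polarCross P.rep S.rep ≠ 0 := by
  rwa [Ne, polarCross_eq_zero_iff, ← Projectivization.mk_eq_mk_iff_crossProduct_eq_zero
    P.rep_nonzero S.rep_nonzero, Projectivization.mk_rep, Projectivization.mk_rep]

lemma polar_dotProduct_rep_eq_zero_and_iff {u v : Fin 3 → F} (hw : polarCross u v ≠ 0)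
    (R : ℙ F (Fin 3 → F)) :
    polar u ⬝ᵥ R.rep = 0 ∧ polar v ⬝ᵥ R.rep = 0 ↔
      R = Projectivization.mk F (polarCross u v) hw := by
  constructor
  · rintro ⟨hu, hv⟩
    have hcross : polarCross u v ⨯₃ R.rep = 0 := by simp [polarCross_cross, hu, hv]
    rw [← Projectivization.mk_eq_mk_iff_crossProduct_eq_zero hw R.rep_nonzero,
      Projectivization.mk_rep] at hcross
    exact hcross.symm
  · rintro rfl
    simp only [dotProduct_mk_rep_eq_zero_iff, polarCross, dot_self_cross, dot_cross_self, and_self]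

lemma sum_ind_Bc_mul_ind_Bc [NeZero (2 : F)] (pred : ℙ F (Fin 3 → F) → Prop)
    [Fintype {R // pred R}] {u v : Fin 3 → F} (hw : polarCross u v ≠ 0) :
    ∑ R : {R // pred R}, ind (Bc F u R.1.rep = 0) * ind (Bc F v R.1.rep = 0) =
      ind (pred (Projectivization.mk F (polarCross u v) hw)) := by
  simp only [ind_mul_ind, Bc_eq_zero_iff, polar_dotProduct_rep_eq_zero_and_iff hw]
  exact sum_ind_val_eq pred _

lemma sum_ind_Bc_anisoPt_eq_zero [NeZero (2 : F)] [Fintype (AnisoPt F)] {p : Fin 3 → F}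
    (hp : Qc F p ≠ 0) : ∑ R : AnisoPt F, ind (Bc F p R.1.rep = 0) = 0 := by
  simp only [Bc_eq_zero_iff]
  have hQ : ∀ R : AnisoPt F, polar p ⬝ᵥ R.1.rep = 0 → Qc F (polarCross p R.1.rep) ≠ 0 := by
    intro R hR
    have h4 : (4 : F) ≠ 0 := by
      rw [show (4 : F) = 2 ^ 2 by norm_num]
      exact pow_ne_zero 2 two_ne_zero
    rw [Qc_polarCross, hR]
    simpa using mul_ne_zero (mul_ne_zero h4 hp) R.2
  set g : ∀ R : AnisoPt F, polar p ⬝ᵥ R.1.rep = 0 → AnisoPt F := fun R hR =>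
    ⟨Projectivization.mk F _ (ne_zero_of_Qc_ne_zero (hQ R hR)),
      by rw [Ne, Qc_mk_rep_eq_zero_iff]; exact hQ R hR⟩
  have hperp : ∀ R hR, polar R.1.rep ⬝ᵥ (g R hR).1.rep = 0 := fun R hR => by
    rw [dotProduct_mk_rep_eq_zero_iff]
    exact dot_cross_self _ _
  refine sum_ind_eq_zero_of_involution g (fun R hR => ?_) (fun R hR => ?_) (fun R hR h => ?_)
  · rw [dotProduct_mk_rep_eq_zero_iff]
    exact dot_self_cross _ _
  · refine Subtype.ext ((polar_dotProduct_rep_eq_zero_and_iff _ R.1).1 ⟨hR, ?_⟩).symm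
    rw [polar_dotProduct_comm]
    exact hperp R hR
  · have := hperp R hR
    rw [h, polar_dotProduct_self] at this
    exact R.2 ((mul_eq_zero.1 this).resolve_left two_ne_zero)

lemma sum_ind_polar_dotProduct_ne_zero_absPt_eq_zero [Fintype (AbsPt F)] {p : Fin 3 → F}
    (hp : Qc F p ≠ 0) : ∑ X : AbsPt F, ind (polar p ⬝ᵥ X.1.rep ≠ 0) = 0 := by
  have hp0 := ne_zero_of_Qc_ne_zero hp
  have hne (X : AbsPt F) := reflect_ne_zero hp X.1.rep_nonzero
  set g : ∀ X : AbsPt F, polar p ⬝ᵥ X.1.rep ≠ 0 → AbsPt F := fun X _ =>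
    ⟨Projectivization.mk F _ (hne X), by rw [Qc_mk_rep_eq_zero_iff, Qc_reflect, X.2, mul_zero]⟩
  refine sum_ind_eq_zero_of_involution g (fun X hX => ?_) (fun X hX => ?_) (fun X hX h => ?_)
  · rw [Ne, dotProduct_mk_rep_eq_zero_iff, polar_dotProduct_reflect, neg_eq_zero]
    exact mul_ne_zero hp hX
  · obtain ⟨c, hc, hrep⟩ := exists_mk_rep_eq_smul _ (hne X)
    refine Subtype.ext ?_
    conv_rhs => rw [← X.1.mk_rep]
    simp only [g, hrep, reflect_smul, reflect_reflect, smul_smul]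
    rw [Projectivization.mk_eq_mk_iff']
    exact ⟨_, rfl⟩
  · have hcross : reflect p X.1.rep ⨯₃ X.1.rep = 0 := by
      rw [← Projectivization.mk_eq_mk_iff_crossProduct_eq_zero (hne X) X.1.rep_nonzero,
        Projectivization.mk_rep]
      exact congrArg Subtype.val h
    rw [reflect_cross_self, smul_eq_zero, neg_eq_zero,
      ← Projectivization.mk_eq_mk_iff_crossProduct_eq_zero hp0 X.1.rep_nonzero,
      Projectivization.mk_rep] at hcross
    refine hcross.elim hX fun hpX => hp ?_
    rw [← Qc_mk_rep_eq_zero_iff p hp0, hpX]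
    exact X.2

end Projective

section Conic

variable {F : Type} [Field F]

def conicVec : Option F → Fin 3 → F
  | none => ![0, 0, 1]
  | some t => ![1, t, t ^ 2]

lemma conicVec_ne_zero (o : Option F) : conicVec o ≠ 0 := by
  cases o <;> simp [conicVec]

lemma Qc_conicVec (o : Option F) : Qc F (conicVec o) = 0 := by
  cases o <;> simp [conicVec, Qc]

noncomputable def conicPt (o : Option F) : AbsPt F :=
  ⟨Projectivization.mk F (conicVec o) (conicVec_ne_zero o),
    (Qc_mk_rep_eq_zero_iff _ _).2 (Qc_conicVec o)⟩

lemma conicPt_injective : Function.Injective (conicPt (F := F)) := by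
  intro o o' h
  have h := congrArg Subtype.val h
  simp only [conicPt, Projectivization.mk_eq_mk_iff_crossProduct_eq_zero] at h
  have h0 := congrFun h 0
  have h1 := congrFun h 1
  have h2 := congrFun h 2
  rcases o with _ | t <;> rcases o' with _ | t' <;> simp [conicVec, cross_apply] at h0 h1 h2 ⊢
  linear_combination -h2

lemma conicPt_surjective : Function.Surjective (conicPt (F := F)) := by
  rintro ⟨X, hX⟩
  have hQ : X.rep 1 ^ 2 = X.rep 0 * X.rep 2 := sub_eq_zero.1 hX
  have of_cross : ∀ o, conicVec o ⨯₃ X.rep = 0 → conicPt o = ⟨X, hX⟩ := fun o h =>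
    Subtype.ext (((Projectivization.mk_eq_mk_iff_crossProduct_eq_zero _ X.rep_nonzero).2 h).trans
      X.mk_rep)
  by_cases h0 : X.rep 0 = 0
  · have h1 : X.rep 1 = 0 := by simpa [h0] using hQ
    refine ⟨none, of_cross none ?_⟩
    ext i; fin_cases i <;> simp [conicVec, cross_apply, h0, h1]
  · refine ⟨some (X.rep 1 / X.rep 0), of_cross _ ?_⟩
    ext i; fin_cases i <;> simp [conicVec, cross_apply] <;> field_simp
    · linear_combination -X.rep 1 * hQ
    · linear_combination hQ
    · ring

end Conic

section Finite

variable {F : Type} [Field F] [Fintype F]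

lemma two_ne_zero_of_odd_card (hodd : Odd (Fintype.card F)) : (2 : F) ≠ 0 :=
  Ring.two_ne_zero fun h => by
    have := FiniteField.even_card_iff_char_two.1 h
    rw [Nat.odd_iff] at hodd
    omega

lemma card_absPt [Fintype (AbsPt F)] : Fintype.card (AbsPt F) = Fintype.card F + 1 := by
  rw [← Fintype.card_option]
  exact (Fintype.card_of_bijective ⟨conicPt_injective, conicPt_surjective⟩).symm

lemma card_anisoPt [Fintype (AnisoPt F)] : Fintype.card (AnisoPt F) = Fintype.card F ^ 2 := by
  classical
  let := Fintype.ofFinite (ℙ F (Fin 3 → F))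
  have hP : Fintype.card (ℙ F (Fin 3 → F)) = Fintype.card F ^ 2 + Fintype.card F + 1 := by
    rw [← Nat.card_eq_fintype_card, Projectivization.card_of_finrank F (Fin 3 → F)
      (Module.finrank_fin_fun F)]
    simp only [Finset.sum_range_succ, Finset.range_zero, Finset.sum_empty, pow_zero, pow_one,
      Nat.card_eq_fintype_card]
    ring
  rw [Fintype.card_subtype_compl, hP, card_absPt]
  omega

lemma sum_ind_Bc_absPt_eq_zero (hodd : Odd (Fintype.card F)) [Fintype (AbsPt F)]
    {p : Fin 3 → F} (hp : Qc F p ≠ 0) : ∑ X : AbsPt F, ind (Bc F p X.1.rep = 0) = 0 := by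
  have : NeZero (2 : F) := ⟨two_ne_zero_of_odd_card hodd⟩
  obtain ⟨k, hk⟩ := hodd
  calc ∑ X : AbsPt F, ind (Bc F p X.1.rep = 0)
      = ∑ X : AbsPt F, (1 + ind (polar p ⬝ᵥ X.1.rep ≠ 0)) := by
        refine Finset.sum_congr rfl fun X _ => ?_
        rw [ind_not, ← add_assoc, CharTwo.add_self_eq_zero, zero_add, Bc_eq_zero_iff]
    _ = ((2 * (k + 1) : ℕ) : ZMod 2) := by
        rw [Finset.sum_add_distrib, sum_ind_polar_dotProduct_ne_zero_absPt_eq_zero hp,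
          Finset.sum_const, Finset.card_univ, card_absPt, hk]
        push_cast [nsmul_eq_mul]
        ring
    _ = 0 := by rw [Nat.cast_mul, ZMod.natCast_self, zero_mul]

end Finite

section Incidence

variable {F : Type} [Field F]

/-- The matrix `N` of the outline above. -/
noncomputable def absIncidence (F : Type) [Field F] : Matrix (AnisoPt F) (AbsPt F) (ZMod 2) :=
  Matrix.of fun P X => ind (Bc F P.1.rep X.1.rep = 0)

lemma A11_mulVec_one [NeZero (2 : F)] [Fintype (AnisoPt F)] : A11 F *ᵥ 1 = 0 :=
  funext fun P => by
    simpa [Matrix.mulVec, dotProduct, A11] using sum_ind_Bc_anisoPt_eq_zero P.2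

lemma absIncidence_mulVec_one [Fintype F] (hodd : Odd (Fintype.card F)) [Fintype (AbsPt F)] :
    absIncidence F *ᵥ 1 = 0 :=
  funext fun P => by
    simpa [Matrix.mulVec, dotProduct, absIncidence] using sum_ind_Bc_absPt_eq_zero hodd P.2

lemma A11_mul_A11 [Fintype F] (hodd : Odd (Fintype.card F)) [Fintype (AnisoPt F)]
    [DecidableEq (AnisoPt F)] [Fintype (AbsPt F)] :
    A11 F * A11 F = Matrix.of (fun _ _ => 1) + 1 + absIncidence F * (absIncidence F)ᵀ := by
  have : NeZero (2 : F) := ⟨two_ne_zero_of_odd_card hodd⟩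
  ext P S
  simp only [Matrix.mul_apply, Matrix.add_apply, Matrix.of_apply, Matrix.one_apply, A11,
    absIncidence, Matrix.transpose_apply]
  simp_rw [Bc_comm _ S.1.rep]
  rcases eq_or_ne P S with rfl | hPS
  · simp only [ind_mul_ind, and_self, if_pos, sum_ind_Bc_anisoPt_eq_zero P.2,
      sum_ind_Bc_absPt_eq_zero hodd P.2, CharTwo.add_self_eq_zero]
  · have hw := polarCross_rep_ne_zero (Subtype.coe_ne_coe.2 hPS)
    rw [sum_ind_Bc_mul_ind_Bc _ hw, sum_ind_Bc_mul_ind_Bc _ hw, if_neg hPS, add_zero, ind_not]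

lemma absIncidence_transpose_mul_A11 [NeZero (2 : F)] [Fintype (AnisoPt F)] :
    (absIncidence F)ᵀ * A11 F = Matrix.of (fun _ _ => 1) + (absIncidence F)ᵀ := by
  ext X P
  simp only [Matrix.mul_apply, Matrix.add_apply, Matrix.of_apply, A11, absIncidence,
    Matrix.transpose_apply]
  simp_rw [Bc_comm _ X.1.rep, Bc_comm _ P.1.rep]
  have hXP : X.1 ≠ P.1 := fun h => P.2 (h ▸ X.2)
  rw [sum_ind_Bc_mul_ind_Bc _ (polarCross_rep_ne_zero hXP), Ne, Qc_mk_rep_eq_zero_iff,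
    Qc_polarCross, X.2, mul_zero, zero_mul, sub_zero, pow_eq_zero_iff two_ne_zero, ind_not,
    Bc_eq_zero_iff, polar_dotProduct_comm]

end Incidence

section Kernel

variable {F : Type} [Field F] [Fintype F]

lemma of_one_mulVec {ι κ : Type*} [Fintype κ] (x : κ → ZMod 2) :
    Matrix.of (fun (_ : ι) (_ : κ) => (1 : ZMod 2)) *ᵥ x = (∑ k, x k) • 1 := by
  ext
  simp [Matrix.mulVec, dotProduct]

lemma eq_sum_smul_one_of_A11_mulVec_eq_zero (hodd : Odd (Fintype.card F)) [Fintype (AnisoPt F)]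
    [DecidableEq (AnisoPt F)] [Fintype (AbsPt F)] {x : AnisoPt F → ZMod 2}
    (hx : A11 F *ᵥ x = 0) : x = (∑ P, x P) • 1 := by
  have : NeZero (2 : F) := ⟨two_ne_zero_of_odd_card hodd⟩
  have hN : (absIncidence F)ᵀ *ᵥ x = (∑ P, x P) • 1 := by
    have h : ((absIncidence F)ᵀ * A11 F) *ᵥ x = 0 := by
      rw [← Matrix.mulVec_mulVec, hx, Matrix.mulVec_zero]
    rw [absIncidence_transpose_mul_A11, Matrix.add_mulVec, of_one_mulVec] at h
    rw [← sub_eq_zero, ZModModule.sub_eq_add, add_comm, h]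
  have h : (A11 F * A11 F) *ᵥ x = 0 := by rw [← Matrix.mulVec_mulVec, hx, Matrix.mulVec_zero]
  rw [A11_mul_A11 hodd, Matrix.add_mulVec, Matrix.add_mulVec, of_one_mulVec, Matrix.one_mulVec,
    ← Matrix.mulVec_mulVec, hN, Matrix.mulVec_smul, absIncidence_mulVec_one hodd, smul_zero,
    add_zero] at h
  rw [← sub_eq_zero, ZModModule.sub_eq_add, add_comm, h]

lemma ker_mulVecLin_A11 (hodd : Odd (Fintype.card F)) [Fintype (AnisoPt F)]
    [DecidableEq (AnisoPt F)] [Fintype (AbsPt F)] :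
    LinearMap.ker (A11 F).mulVecLin = Submodule.span (ZMod 2) {1} := by
  have : NeZero (2 : F) := ⟨two_ne_zero_of_odd_card hodd⟩
  refine le_antisymm (fun x hx => ?_) ?_
  · rw [Submodule.mem_span_singleton]
    exact ⟨_, (eq_sum_smul_one_of_A11_mulVec_eq_zero hodd hx).symm⟩
  · rw [Submodule.span_le, Set.singleton_subset_iff, SetLike.mem_coe, LinearMap.mem_ker,
      Matrix.mulVecLin_apply, A11_mulVec_one]

end Kernel

/-- The 2-rank of the anisotropic incidence matrix of `PG(2,q)` is `q² - 1`. -/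
theorem stmt11 (F : Type) [Field F] [Fintype F] (q : ℕ)
    (hq : Fintype.card F = q) (hodd : Odd q)
    [Fintype {P : Projectivization F (Fin 3 → F) // Qc F P.rep ≠ 0}] :
    (A11 F).rank = q ^ 2 - 1 := by
  classical
  subst hq
  let := Fintype.ofFinite (AbsPt F)
  have : Nonempty (AnisoPt F) := Fintype.card_pos_iff.1 (by rw [card_anisoPt]; positivity)
  have hrank := LinearMap.finrank_range_add_finrank_ker (A11 F).mulVecLin
  rw [ker_mulVecLin_A11 hodd, finrank_span_singleton one_ne_zero,
    Module.finrank_fintype_fun_eq_card, card_anisoPt] at hrank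
  rw [Matrix.rank]
  omega
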